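/- arXiv:1811.10226 — 6 statements merged into one kernel-verified Lean document; each statement's English description precedes it below -/
import Mathlib

section
/- The homogeneous steady state equation a - U - U V^2 = 0 together with -mV + (1-bV)UV^2 = 0 with V ≠ 0 admits exactly two solutions with V > 0 if and only if a/m > 2(b + sqrt(1+b^2)), and the V-components are given by V = (a/m ∓ sqrt((a/m)^2 - 4(1 + (a/m)b))) / (2(1 + (a/m)b)). -/
/-!
Eliminating `U = a / (1 + V²)` turns the vegetated steady states into the positive roots of
`(1 + γ b) V² - γ V + 1 = 0` with `γ = a / m`. Both roots of this quadratic are positive, so there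
are exactly two steady states iff its discriminant `(γ - 2b)² - 4(1 + b²)` is positive, i.e.
iff `γ > 2(b + √(1 + b²))`; the `V`-components are then given by the quadratic formula.
-/

open Real

lemma quadratic_eq_zero_iff_of_discrim_nonneg {a b c : ℝ} (ha : a ≠ 0) (hd : 0 ≤ discrim a b c)
    (x : ℝ) :
    a * (x * x) + b * x + c = 0 ↔
      x = (-b + √(discrim a b c)) / (2 * a) ∨ x = (-b - √(discrim a b c)) / (2 * a) :=
  quadratic_eq_zero_iff ha (mul_self_sqrt hd).symm x

lemma ncard_setOf_quadratic_eq_zero_eq_two_iff {a b c : ℝ} (ha : a ≠ 0) :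
    {x : ℝ | a * (x * x) + b * x + c = 0}.ncard = 2 ↔ 0 < discrim a b c := by
  rcases lt_trichotomy (discrim a b c) 0 with hd | hd | hd
  · have hroots : {x : ℝ | a * (x * x) + b * x + c = 0} = ∅ :=
      Set.eq_empty_of_forall_notMem fun x =>
        quadratic_ne_zero_of_discrim_ne_sq (fun s hs => (hs ▸ hd).not_ge (sq_nonneg s)) x
    simp [hroots, hd.le.not_gt]
  · have hroots : {x : ℝ | a * (x * x) + b * x + c = 0} = {-b / (2 * a)} :=
      Set.ext (quadratic_eq_zero_iff_of_discrim_eq_zero ha hd)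
    simp [hroots, hd]
  · have hroots : {x : ℝ | a * (x * x) + b * x + c = 0} =
        {(-b + √(discrim a b c)) / (2 * a), (-b - √(discrim a b c)) / (2 * a)} :=
      Set.ext (quadratic_eq_zero_iff_of_discrim_nonneg ha hd.le)
    have hsqrt : 0 < √(discrim a b c) := sqrt_pos.2 hd
    rw [hroots, Set.ncard_pair]
    · exact iff_of_true rfl hd
    · rw [Ne, div_left_inj' (mul_ne_zero two_ne_zero ha)]
      linarith

lemma pos_of_quadratic_eq_zero {a b c x : ℝ} (ha : 0 < a) (hb : b < 0) (hc : 0 < c)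
    (h : a * (x * x) + b * x + c = 0) : 0 < x := by
  by_contra! hx
  nlinarith [mul_nonneg ha.le (mul_self_nonneg x), mul_nonneg_of_nonpos_of_nonpos hb.le hx]

namespace Klausmeier

def steadyStates (a m b : ℝ) : Set (ℝ × ℝ) :=
  {p | a - p.1 - p.1 * p.2 ^ 2 = 0 ∧ -m * p.2 + (1 - b * p.2) * p.1 * p.2 ^ 2 = 0 ∧ 0 < p.2}

variable {a m b : ℝ}

lemma mem_steadyStates_iff (hm : m ≠ 0) {p : ℝ × ℝ} :
    p ∈ steadyStates a m b ↔
      p.1 = a / (1 + p.2 ^ 2) ∧ (1 + a / m * b) * (p.2 * p.2) + -(a / m) * p.2 + 1 = 0 ∧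
        0 < p.2 := by
  obtain ⟨U, V⟩ := p
  have h1V : (1 : ℝ) + V ^ 2 ≠ 0 := by positivity
  simp only [steadyStates, Set.mem_ofPred_eq]
  constructor
  · rintro ⟨hwater, hveg, hV⟩
    have hU : U = a / (1 + V ^ 2) := by
      rw [eq_div_iff h1V]; linear_combination -hwater
    -- substituting `U` into the vegetation equation leaves `V` times the quadratic
    have hQ : V * ((m + a * b) * V ^ 2 - a * V + m) = 0 := by
      linear_combination (-(1 + V ^ 2)) * hveg - (1 - b * V) * V ^ 2 * hwater
    refine ⟨hU, ?_, hV⟩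
    field_simp
    linear_combination (mul_eq_zero.1 hQ).resolve_left hV.ne'
  · rintro ⟨hU, hQ, hV⟩
    field_simp at hQ
    subst hU
    refine ⟨by field_simp; ring, ?_, hV⟩
    field_simp
    linear_combination (-V) * hQ

lemma steadyStates_eq_image (ha : 0 < a) (hm : 0 < m) (hb : 0 < b) :
    steadyStates a m b = (fun V => (a / (1 + V ^ 2), V)) ''
      {V | (1 + a / m * b) * (V * V) + -(a / m) * V + 1 = 0} := by
  have hγ : 0 < a / m := div_pos ha hm
  ext ⟨U, V⟩
  rw [mem_steadyStates_iff hm.ne']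
  constructor
  · rintro ⟨hU, hQ, -⟩
    exact ⟨V, hQ, Prod.ext hU.symm rfl⟩
  · rintro ⟨V, hQ, hUV⟩
    obtain ⟨rfl, rfl⟩ := Prod.ext_iff.1 hUV
    exact ⟨rfl, hQ, pos_of_quadratic_eq_zero (by positivity) (neg_neg_of_pos hγ) one_pos hQ⟩

lemma discrim_pos_iff {γ : ℝ} (hγ : 0 ≤ γ) :
    0 < discrim (1 + γ * b) (-γ) 1 ↔ 2 * (b + √(1 + b ^ 2)) < γ := by
  set t := √(1 + b ^ 2)
  have ht : t ^ 2 = 1 + b ^ 2 := sq_sqrt (by positivity)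
  have hbt : b < t := by nlinarith [sqrt_nonneg (1 + b ^ 2)]
  have hfactor : discrim (1 + γ * b) (-γ) 1 = (γ - 2 * b - 2 * t) * (γ - 2 * b + 2 * t) := by
    rw [discrim]; linear_combination 4 * ht
  rw [hfactor, mul_pos_iff_of_pos_right (by linarith), sub_pos]
  constructor <;> intro h <;> linarith

end Klausmeier

/-- The homogeneous vegetated steady states of the modified Klausmeier model:
there are exactly two solutions with `V > 0` iff `a/m > 2(b + √(1+b²))`, and the
`V`-components are given by the quadratic formula. -/
theorem stmt_0 (a m b : ℝ) (ha : 0 < a) (hm : 0 < m) (hb : 0 < b) :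
    (({p : ℝ × ℝ | a - p.1 - p.1 * p.2 ^ 2 = 0 ∧
        -m * p.2 + (1 - b * p.2) * p.1 * p.2 ^ 2 = 0 ∧ 0 < p.2}).ncard = 2 ↔
      a / m > 2 * (b + Real.sqrt (1 + b ^ 2))) ∧
    ∀ p : ℝ × ℝ, (a - p.1 - p.1 * p.2 ^ 2 = 0 ∧
        -m * p.2 + (1 - b * p.2) * p.1 * p.2 ^ 2 = 0 ∧ 0 < p.2) →
      p.2 = (a / m - Real.sqrt ((a / m) ^ 2 - 4 * (1 + (a / m) * b))) /
              (2 * (1 + (a / m) * b)) ∨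
      p.2 = (a / m + Real.sqrt ((a / m) ^ 2 - 4 * (1 + (a / m) * b))) /
              (2 * (1 + (a / m) * b)) := by
  have hc : 1 + a / m * b ≠ 0 := by positivity
  refine ⟨?_, fun p hp => ?_⟩
  · change (Klausmeier.steadyStates a m b).ncard = 2 ↔ _
    rw [Klausmeier.steadyStates_eq_image ha hm hb,
      Set.ncard_image_of_injective _ fun V W h => congrArg Prod.snd h,
      ncard_setOf_quadratic_eq_zero_eq_two_iff hc, Klausmeier.discrim_pos_iff (div_pos ha hm).le]
  · obtain ⟨-, hQ, -⟩ := (Klausmeier.mem_steadyStates_iff hm.ne').1 hp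
    have hd : 0 ≤ discrim (1 + a / m * b) (-(a / m)) 1 :=
      discrim_eq_sq_of_quadratic_eq_zero hQ ▸ sq_nonneg _
    have hdisc : discrim (1 + a / m * b) (-(a / m)) 1 = (a / m) ^ 2 - 4 * (1 + a / m * b) := by
      rw [discrim]; ring
    rw [quadratic_eq_zero_iff_of_discrim_nonneg hc hd, hdisc, neg_neg] at hQ
    exact hQ.symm
end

section
/- Let b, m, u > 0 with u > 4bm and set v_+ = (1 + sqrt(1 - 4bm/u))/(2b), v_- = (1 - sqrt(1 - 4bm/u))/(2b), k = v_+ sqrt(ub)/(2 sqrt 2), and c = (sqrt(2bu)/2)(v_+ - 2v_-). Then the function v(ξ) = (v_+/2)(1 - tanh(kξ)) together with q = v' solves v'' + c v' - mv + (1-bv)uv^2 = 0 on ℝ, with v(ξ) → v_+ as ξ → -∞ and v(ξ) → 0 as ξ → +∞. -/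
/-!
With `t = tanh (k ξ)` one has `v' = -(v₊ k / 2)(1 - t²)` and `v'' = v₊ k² t (1 - t²)`, so the
left-hand side of the equation is a cubic polynomial in `t`. It vanishes identically because
`8 k² = u b v₊²`, `4 c k = u v₊ (3 b v₊ - 2)` (using `v₊ + v₋ = 1 / b`), and `v₊` is a root of
`u b v² - u v + m`. The limits come from `tanh → ±1` at `±∞`, as `k > 0`.
-/

open Real Filter Topology

namespace Real

theorem hasDerivAt_tanh (x : ℝ) : HasDerivAt tanh (1 - tanh x ^ 2) x := by
  have h := (hasDerivAt_sinh x).div (hasDerivAt_cosh x) (cosh_pos x).ne'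
  rw [show sinh / cosh = tanh from funext fun y => (tanh_eq_sinh_div_cosh y).symm] at h
  refine h.congr_deriv ?_
  rw [tanh_eq_sinh_div_cosh]
  field_simp

theorem tanh_eq_one_sub (x : ℝ) : tanh x = 1 - 2 / (exp (2 * x) + 1) := by
  rw [tanh_eq_sinh_div_cosh, sinh_eq, cosh_eq, exp_neg, two_mul, exp_add]
  field_simp
  ring

theorem tendsto_tanh_atTop : Tendsto tanh atTop (𝓝 1) := by
  have hexp : Tendsto (fun x => exp (2 * x) + 1) atTop atTop :=
    tendsto_atTop_add_const_right _ 1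
      (tendsto_exp_atTop.comp (tendsto_id.const_mul_atTop two_pos))
  simpa [← tanh_eq_one_sub] using
    (tendsto_const_nhds (x := (1 : ℝ))).sub ((tendsto_const_nhds (x := (2 : ℝ))).div_atTop hexp)

theorem tendsto_tanh_atBot : Tendsto tanh atBot (𝓝 (-1)) := by
  simpa [Function.comp_def] using (tendsto_tanh_atTop.comp tendsto_neg_atBot_atTop).neg

end Real

section TanhFront

variable (A k : ℝ)

theorem hasDerivAt_tanh_comp_mul (ξ : ℝ) :
    HasDerivAt (fun ξ => tanh (k * ξ)) ((1 - tanh (k * ξ) ^ 2) * k) ξ :=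
  (hasDerivAt_tanh (k * ξ)).comp ξ ((hasDerivAt_id ξ).const_mul k |>.congr_deriv (mul_one k))

theorem deriv_tanhFront :
    deriv (fun ξ => A / 2 * (1 - tanh (k * ξ)))
      = fun ξ => -(A * k / 2) * (1 - tanh (k * ξ) ^ 2) := by
  funext ξ
  refine (((hasDerivAt_tanh_comp_mul k ξ).const_sub 1).const_mul (A / 2)).deriv.trans ?_
  ring

theorem deriv_deriv_tanhFront :
    deriv (deriv fun ξ => A / 2 * (1 - tanh (k * ξ)))
      = fun ξ => A * k ^ 2 * tanh (k * ξ) * (1 - tanh (k * ξ) ^ 2) := by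
  rw [deriv_tanhFront]
  funext ξ
  refine ((((hasDerivAt_tanh_comp_mul k ξ).pow 2).const_sub 1).const_mul
    (-(A * k / 2))).deriv.trans ?_
  ring

theorem tanhFront_ode {b m u c : ℝ} (hk : 8 * k ^ 2 = u * b * A ^ 2)
    (hc : 4 * c * k = u * A * (3 * b * A - 2)) (hA : u * b * A ^ 2 - u * A + m = 0) (ξ : ℝ) :
    let v := fun ξ => A / 2 * (1 - tanh (k * ξ))
    deriv (deriv v) ξ + c * deriv v ξ - m * v ξ + (1 - b * v ξ) * u * v ξ ^ 2 = 0 := by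
  intro v
  rw [deriv_deriv_tanhFront, deriv_tanhFront]
  set t := tanh (k * ξ)
  linear_combination (A * t * (1 - t ^ 2) / 8) * hk - (A / 8 * (1 - t ^ 2)) * hc
    + (A * (t - 1) / 2) * hA

variable {k}

theorem tendsto_tanhFront_atBot (hk : 0 < k) :
    Tendsto (fun ξ => A / 2 * (1 - tanh (k * ξ))) atBot (𝓝 A) := by
  have h := ((tendsto_tanh_atBot.comp (tendsto_id.const_mul_atBot hk)).const_sub 1).const_mul
    (A / 2)
  rwa [show A / 2 * (1 - -1) = A by ring] at h

theorem tendsto_tanhFront_atTop (hk : 0 < k) :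
    Tendsto (fun ξ => A / 2 * (1 - tanh (k * ξ))) atTop (𝓝 0) := by
  have h := ((tendsto_tanh_atTop.comp (tendsto_id.const_mul_atTop hk)).const_sub 1).const_mul
    (A / 2)
  rwa [sub_self, mul_zero] at h

end TanhFront

section Parameters

variable {b m u : ℝ}

theorem quadratic_root_of_sq_eq (hb : b ≠ 0) (hu : u ≠ 0) {S : ℝ} (hS : S ^ 2 = 1 - 4 * b * m / u) :
    let A := (1 + S) / (2 * b)
    u * b * A ^ 2 - u * A + m = 0 := by
  intro A
  have hS' : u * S ^ 2 = u - 4 * b * m := by rw [hS]; field_simp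
  simp only [A]
  field_simp
  linear_combination hS'

theorem eight_mul_sq_wavenumber (hub : 0 ≤ u * b) (A : ℝ) :
    8 * (A * √(u * b) / (2 * √2)) ^ 2 = u * b * A ^ 2 := by
  rw [div_pow, mul_pow, mul_pow, sq_sqrt hub, sq_sqrt zero_le_two]
  ring

theorem four_mul_speed_mul_wavenumber (hb : b ≠ 0) (hub : 0 ≤ u * b) {A A' : ℝ}
    (hsum : A + A' = 1 / b) :
    4 * (√(2 * b * u) / 2 * (A - 2 * A')) * (A * √(u * b) / (2 * √2))
      = u * A * (3 * b * A - 2) := by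
  have hsqrt : √(2 * b * u) * √(u * b) = √2 * (u * b) := by
    rw [← sqrt_mul (by linarith) (u * b), show 2 * b * u * (u * b) = 2 * (u * b) ^ 2 by ring,
      sqrt_mul zero_le_two, sqrt_sq hub]
  have hA' : A' = 1 / b - A := by linarith
  calc 4 * (√(2 * b * u) / 2 * (A - 2 * A')) * (A * √(u * b) / (2 * √2))
      = (√(2 * b * u) * √(u * b)) * A * (A - 2 * A') / √2 := by field_simp; ring
    _ = u * A * (3 * b * A - 2) := by rw [hsqrt, hA']; field_simp; ring

end Parameters

/-- The explicit front `φ_⋄`: `v(ξ) = (v₊/2)(1 - tanh(kξ))` solves the layer ODE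
`v'' + c v' - m v + (1-bv) u v² = 0` with speed `c = c*_⋄(u)`, connecting `v₊` at
`-∞` to `0` at `+∞`. -/
theorem stmt_4 (b m u : ℝ) (hb : 0 < b) (hm : 0 < m) (hu : 4 * b * m < u) :
    let vp : ℝ := (1 + Real.sqrt (1 - 4 * b * m / u)) / (2 * b)
    let vm : ℝ := (1 - Real.sqrt (1 - 4 * b * m / u)) / (2 * b)
    let k : ℝ := vp * Real.sqrt (u * b) / (2 * Real.sqrt 2)
    let c : ℝ := Real.sqrt (2 * b * u) / 2 * (vp - 2 * vm)
    let v : ℝ → ℝ := fun ξ => vp / 2 * (1 - Real.tanh (k * ξ))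
    (∀ ξ : ℝ, deriv (deriv v) ξ + c * deriv v ξ - m * v ξ
        + (1 - b * v ξ) * u * (v ξ) ^ 2 = 0) ∧
    Filter.Tendsto v Filter.atBot (nhds vp) ∧
    Filter.Tendsto v Filter.atTop (nhds 0) := by
  intro vp vm k c v
  have hu0 : 0 < u := (by positivity : 0 < 4 * b * m).trans hu
  have hub : 0 ≤ u * b := by positivity
  have hS : √(1 - 4 * b * m / u) ^ 2 = 1 - 4 * b * m / u :=
    sq_sqrt (sub_nonneg.mpr ((div_le_one hu0).mpr hu.le))
  have hsum : vp + vm = 1 / b := by simp only [vp, vm]; field_simp; ring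
  have hk : 0 < k := by simp only [k, vp]; positivity
  exact ⟨tanhFront_ode vp k (eight_mul_sq_wavenumber hub vp)
      (four_mul_speed_mul_wavenumber hb.ne' hub hsum) (quadratic_root_of_sq_eq hb.ne' hu0.ne' hS),
    tendsto_tanhFront_atBot vp hk, tendsto_tanhFront_atTop vp hk⟩
end

section
/- Let b, m > 0 and (9/2)b ≤ a/m < (25/4)b. Then u* := (1/8)(17a − 18bm − 15 sqrt(a^2 − 4abm)) satisfies 4bm < u* ≤ a and solves the equation (1/(2 sqrt(2b)))(−sqrt(a) + 3 sqrt(a−4bm)) = −(1/(2 sqrt(2b)))(−sqrt(u*) + 3 sqrt(u* − 4bm)), i.e., c*_⋄(a) = c*_†(u*). -/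
set_option maxHeartbeats 800000


/-- For `(9/2)b ≤ a/m < (25/4)b`, the value
`u* = (1/8)(17a - 18bm - 15√(a² - 4abm))` satisfies `4bm < u* ≤ a` and solves the
speed-matching condition `c*_⋄(a) = c*_†(u*)`. -/
theorem stmt_9 (a b m : ℝ) (hb : 0 < b) (hm : 0 < m)
    (h1 : 9 / 2 * b ≤ a / m) (h2 : a / m < 25 / 4 * b) :
    let ustar : ℝ := 1 / 8 * (17 * a - 18 * b * m - 15 * Real.sqrt (a ^ 2 - 4 * a * b * m))
    4 * b * m < ustar ∧ ustar ≤ a ∧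
      1 / (2 * Real.sqrt (2 * b)) * (-Real.sqrt a + 3 * Real.sqrt (a - 4 * b * m)) =
        -(1 / (2 * Real.sqrt (2 * b)) *
          (-Real.sqrt ustar + 3 * Real.sqrt (ustar - 4 * b * m))) := by
  intro ustar
  have hud : ustar = 1 / 8 * (17 * a - 18 * b * m - 15 * Real.sqrt (a ^ 2 - 4 * a * b * m)) :=
    rfl
  clear_value ustar
  have hbm : 0 < b * m := mul_pos hb hm
  have ha9 : 9 / 2 * b * m ≤ a := by
    have := (le_div_iff₀ hm).mp h1; linarith
  have ha25 : a < 25 / 4 * b * m := by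
    have := (div_lt_iff₀ hm).mp h2; linarith
  have ha : 0 < a := by nlinarith
  have ha4 : 0 ≤ a - 4 * b * m := by nlinarith
  set p := Real.sqrt a with hpdef
  set q := Real.sqrt (a - 4 * b * m) with hqdef
  have hp0 : 0 ≤ p := Real.sqrt_nonneg _
  have hq0 : 0 ≤ q := Real.sqrt_nonneg _
  have hp2 : p ^ 2 = a := Real.sq_sqrt ha.le
  have hq2 : q ^ 2 = a - 4 * b * m := Real.sq_sqrt ha4
  have hs : Real.sqrt (a ^ 2 - 4 * a * b * m) = p * q := by
    rw [show a ^ 2 - 4 * a * b * m = a * (a - 4 * b * m) by ring,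
      Real.sqrt_mul ha.le]
  -- sign facts
  have h53 : 3 * q ≤ 5 * p := by nlinarith [sq_nonneg (5 * p - 3 * q), sq_nonneg (5 * p + 3 * q)]
  have h35 : 5 * q < 3 * p := by nlinarith [sq_nonneg (3 * p - 5 * q), sq_nonneg (3 * p + 5 * q)]
  have h13 : p ≤ 3 * q := by nlinarith [sq_nonneg (p - 3 * q), sq_nonneg (p + 3 * q)]
  have hu : ustar = ((5 * p - 3 * q) / 4) ^ 2 := by
    rw [hud, hs]; linear_combination (-25 / 16) * hp2 + (-9 / 16) * hq2
  have hu4 : ustar - 4 * b * m = ((3 * p - 5 * q) / 4) ^ 2 := by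
    rw [hud, hs]; linear_combination (-9 / 16) * hp2 + (-25 / 16) * hq2
  have hsu : Real.sqrt ustar = (5 * p - 3 * q) / 4 := by
    rw [hu]; exact Real.sqrt_sq (by linarith)
  have hsu4 : Real.sqrt (ustar - 4 * b * m) = (3 * p - 5 * q) / 4 := by
    rw [hu4]; exact Real.sqrt_sq (by linarith)
  refine ⟨by nlinarith [sq_nonneg (3 * p - 5 * q)], by nlinarith, ?_⟩
  rw [hsu, hsu4]; ring
end

section
/- Let a, m > 0, c ∈ ℝ, ℓ ∈ ℝ and ε > 0 with 1 + εc ≠ 0. The matrix A_d = [[ε(1+λ)/(1+εc), 0, 0],[0,0,1],[0, m+ℓ²+λ, −c]] is hyperbolic (has no purely imaginary eigenvalue) for every λ ∈ ℂ with Re λ > −min{m+ℓ², 1}. -/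
/-- The asymptotic matrix `A_d` of the linearization around the desert state is
hyperbolic (no eigenvalue with zero real part) whenever `Re λ > -min{m + ℓ², 1}`. -/
theorem stmt_15 (a m c ℓ ε : ℝ) (ha : 0 < a) (hm : 0 < m) (hε : 0 < ε)
    (hεc : 1 + ε * c ≠ 0) (lam : ℂ)
    (hlam : -min (m + ℓ ^ 2) 1 < lam.re) :
    ∀ μ : ℂ,
      μ ∈ spectrum ℂ
        (!![(ε : ℂ) * (1 + lam) / (1 + (ε : ℂ) * (c : ℂ)), 0, 0;
            0, 0, 1;
            0, (m : ℂ) + (ℓ : ℂ) ^ 2 + lam, -(c : ℂ)] : Matrix (Fin 3) (Fin 3) ℂ) →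
      μ.re ≠ 0 := by
  intro μ hμ hre
  set A : Matrix (Fin 3) (Fin 3) ℂ :=
    !![(ε : ℂ) * (1 + lam) / (1 + (ε : ℂ) * (c : ℂ)), 0, 0;
       0, 0, 1;
       0, (m : ℂ) + (ℓ : ℂ) ^ 2 + lam, -(c : ℂ)] with hA
  rw [spectrum.mem_iff] at hμ
  have hdet : (algebraMap ℂ (Matrix (Fin 3) (Fin 3) ℂ) μ - A).det = 0 := by
    by_contra h
    exact hμ ((Matrix.isUnit_iff_isUnit_det _).2 (isUnit_iff_ne_zero.2 h))
  have hfac : (algebraMap ℂ (Matrix (Fin 3) (Fin 3) ℂ) μ - A).det =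
      (μ - (ε : ℂ) * (1 + lam) / (1 + (ε : ℂ) * (c : ℂ))) *
        (μ * (μ + (c : ℂ)) - ((m : ℂ) + (ℓ : ℂ) ^ 2 + lam)) := by
    simp [hA, Matrix.det_fin_three, Matrix.algebraMap_matrix_apply]
    ring
  rw [hfac, mul_eq_zero] at hdet
  have hc1 : 1 + (ε : ℂ) * (c : ℂ) = ((1 + ε * c : ℝ) : ℂ) := by push_cast; ring
  rcases hdet with h1 | h2
  · have hμeq : μ = (ε : ℂ) * (1 + lam) / (1 + (ε : ℂ) * (c : ℂ)) := by
      linear_combination h1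
    have : μ.re = (ε * (1 + lam.re)) / (1 + ε * c) := by
      rw [hμeq, hc1, Complex.div_ofReal_re]
      simp [Complex.add_re, Complex.mul_re, Complex.ofReal_re, Complex.ofReal_im]
    rw [this] at hre
    have h1lam : 0 < 1 + lam.re := by
      have : -(1:ℝ) ≤ -min (m + ℓ ^ 2) 1 := by
        simp [min_le_right]
      linarith
    exact (div_ne_zero (by positivity) hεc) hre
  · have hKre : 0 < ((m : ℂ) + (ℓ : ℂ) ^ 2 + lam).re := by
      have : ((m : ℂ) + (ℓ : ℂ) ^ 2 + lam).re = m + ℓ ^ 2 + lam.re := by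
        simp [Complex.add_re, Complex.ofReal_re]
        norm_cast
      rw [this]
      have : min (m + ℓ ^ 2) 1 ≤ m + ℓ ^ 2 := min_le_left _ _
      linarith
    have h2' : μ * (μ + (c : ℂ)) = (m : ℂ) + (ℓ : ℂ) ^ 2 + lam := by
      linear_combination h2
    have hre2 : (μ * (μ + (c : ℂ))).re = -(μ.im ^ 2) := by
      simp [Complex.mul_re, Complex.add_re, Complex.add_im, hre]
      ring
    rw [h2'] at hre2
    nlinarith [sq_nonneg μ.im]
end

section
/- Let a, m, b > 0 with a/m > 4b + 1/b and let (U_2, V_2) be the vegetated steady state with V_2 > 1/(2b). Then the Jacobian M = [[−1−V_2², −2U_2V_2],[(1−bV_2)V_2², −m + (2−3bV_2)U_2V_2]] satisfies det M > 0 and trace M < 0; hence (U_2,V_2) is linearly stable against homogeneous perturbations. -/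
/-!
Write `c = a/m`. Then `V₂` is the larger root of `(1 + cb)V² − cV + 1 = 0`, and the hypothesis
`bc > 4b² + 1` places it in the window `1/2 < bV₂ < 1`. The steady-state relation gives
`U₂V₂(1 − bV₂) = m`, which turns the Jacobian into
`det M = m(V₂² + 2bV₂ − 1)/(1 − bV₂)` and `trace M = −1 − V₂² + m(1 − 2bV₂)/(1 − bV₂)`;
both signs are then forced by `1/2 < bV₂ < 1`. A real `2 × 2` matrix with positive determinant
and negative trace has characteristic polynomial `z² − (trace) z + det`, whose complex roots all
lie in the open left half-plane.
-/

theorem Complex.re_lt_zero_of_sq_sub_mul_add_eq_zero {t d : ℝ} (ht : t < 0) (hd : 0 < d) {μ : ℂ}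
    (hμ : μ ^ 2 - (t : ℂ) * μ + (d : ℂ) = 0) : μ.re < 0 := by
  have hre : μ.re ^ 2 - μ.im ^ 2 - t * μ.re + d = 0 := by
    simpa [pow_two] using congrArg Complex.re hμ
  have him : μ.im * (2 * μ.re - t) = 0 := by
    have := congrArg Complex.im hμ
    simp only [pow_two, Complex.sub_im, Complex.add_im, Complex.mul_im, Complex.ofReal_re,
      Complex.ofReal_im, Complex.zero_im] at this
    linear_combination this
  rcases mul_eq_zero.1 him with hreal | hcenter
  · by_contra! hnonneg
    nlinarith
  · linarith

theorem Matrix.re_lt_zero_of_mem_spectrum_of_det_pos_of_trace_neg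
    {M : Matrix (Fin 2) (Fin 2) ℝ} (hdet : 0 < M.det) (htr : M.trace < 0) {μ : ℂ}
    (hμ : μ ∈ spectrum ℂ (M.map Complex.ofReal)) : μ.re < 0 := by
  rw [Matrix.mem_spectrum_iff_isRoot_charpoly,
    show M.map Complex.ofReal = M.map Complex.ofRealHom from rfl, Matrix.charpoly_map,
    Matrix.charpoly_fin_two] at hμ
  exact Complex.re_lt_zero_of_sq_sub_mul_add_eq_zero htr hdet (by simpa using hμ)

namespace Klausmeier

noncomputable def vegetatedV (c b : ℝ) : ℝ :=
  (c + √(c ^ 2 - 4 * (1 + c * b))) / (2 * (1 + c * b))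

noncomputable def vegetatedU (m c b : ℝ) : ℝ :=
  m * (c - vegetatedV c b / (1 - b * vegetatedV c b))

def jacobian (m b U V : ℝ) : Matrix (Fin 2) (Fin 2) ℝ :=
  !![-1 - V ^ 2, -2 * U * V;
     (1 - b * V) * V ^ 2, -m + (2 - 3 * b * V) * U * V]

section SteadyState

variable {c b : ℝ}

theorem vegetatedV_sq_sub_add_eq_zero (hD : 0 ≤ c ^ 2 - 4 * (1 + c * b))
    (hcb : 1 + c * b ≠ 0) :
    (1 + c * b) * vegetatedV c b ^ 2 - c * vegetatedV c b + 1 = 0 := by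
  have hs := Real.sq_sqrt hD
  unfold vegetatedV
  set s := √(c ^ 2 - 4 * (1 + c * b))
  field_simp
  linear_combination hs

variable (hb : 0 < b) (h : 4 * b + 1 / b < c)
include hb h

theorem four_mul_sq_add_one_lt_mul : 4 * b ^ 2 + 1 < b * c := by
  have := mul_lt_mul_of_pos_left h hb
  rwa [mul_add, mul_one_div_cancel hb.ne', ← mul_assoc, mul_comm b 4, mul_assoc, ← pow_two]
    at this

theorem discr_pos : 0 < c ^ 2 - 4 * (1 + c * b) := by
  nlinarith [four_mul_sq_add_one_lt_mul hb h]

theorem one_lt_mul_sqrt_discr : 1 < b * √(c ^ 2 - 4 * (1 + c * b)) := by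
  have hbc := four_mul_sq_add_one_lt_mul hb h
  -- `b²(c² − 4 − 4bc) − 1 = (bc − 4b² − 1)(bc + 1)`
  have hprod : 1 < (b * √(c ^ 2 - 4 * (1 + c * b))) ^ 2 := by
    rw [mul_pow, Real.sq_sqrt (discr_pos hb h).le]
    nlinarith [mul_pos (sub_pos.mpr hbc) (show 0 < b * c + 1 by nlinarith)]
  nlinarith [mul_nonneg hb.le (Real.sqrt_nonneg (c ^ 2 - 4 * (1 + c * b)))]

theorem sqrt_discr_lt : √(c ^ 2 - 4 * (1 + c * b)) < c := by
  have hbc := four_mul_sq_add_one_lt_mul hb h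
  rw [Real.sqrt_lt' (by nlinarith)]
  nlinarith

theorem one_add_mul_pos : 0 < 1 + c * b := by
  nlinarith [four_mul_sq_add_one_lt_mul hb h]

theorem one_half_lt_mul_vegetatedV : 1 / 2 < b * vegetatedV c b := by
  have hk := one_add_mul_pos hb h
  rw [vegetatedV, mul_div_assoc', lt_div_iff₀ (by positivity)]
  nlinarith [one_lt_mul_sqrt_discr hb h]

theorem mul_vegetatedV_lt_one : b * vegetatedV c b < 1 := by
  have hk := one_add_mul_pos hb h
  rw [vegetatedV, mul_div_assoc', div_lt_iff₀ (by positivity)]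
  nlinarith [mul_lt_mul_of_pos_left (sqrt_discr_lt hb h) hb]

theorem vegetatedU_mul_vegetatedV_mul_one_sub (m : ℝ) :
    vegetatedU m c b * vegetatedV c b * (1 - b * vegetatedV c b) = m := by
  have hk := one_add_mul_pos hb h
  have hw : 1 - b * vegetatedV c b ≠ 0 := (sub_pos.mpr (mul_vegetatedV_lt_one hb h)).ne'
  have hq := vegetatedV_sq_sub_add_eq_zero (discr_pos hb h).le hk.ne'
  have hcancel := div_mul_cancel₀ (vegetatedV c b) hw
  rw [vegetatedU]
  linear_combination -m * hq - m * vegetatedV c b * hcancel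

end SteadyState

section Jacobian

variable {m b U V : ℝ}

theorem det_jacobian (hUV : U * V * (1 - b * V) = m) (hw : 1 - b * V ≠ 0) :
    (jacobian m b U V).det = m * (V ^ 2 + 2 * b * V - 1) / (1 - b * V) := by
  rw [jacobian, Matrix.det_fin_two_of, eq_div_iff hw]
  linear_combination ((-1 - V ^ 2) * (2 - 3 * b * V) + 2 * (1 - b * V) * V ^ 2) * hUV

theorem trace_jacobian (hUV : U * V * (1 - b * V) = m) (hw : 1 - b * V ≠ 0) :
    (jacobian m b U V).trace = -1 - V ^ 2 + m * (1 - 2 * b * V) / (1 - b * V) := by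
  rw [jacobian, Matrix.trace_fin_two_of, add_right_inj, eq_div_iff hw]
  linear_combination (2 - 3 * b * V) * hUV

variable (hm : 0 < m) (hUV : U * V * (1 - b * V) = m) (hlo : 1 / 2 < b * V) (hhi : b * V < 1)
include hm hUV hlo hhi

theorem det_jacobian_pos : 0 < (jacobian m b U V).det := by
  rw [det_jacobian hUV (sub_pos.mpr hhi).ne']
  have : 0 < V ^ 2 + 2 * b * V - 1 := by nlinarith [sq_nonneg V]
  have : 0 < 1 - b * V := sub_pos.mpr hhi
  positivity

theorem trace_jacobian_neg : (jacobian m b U V).trace < 0 := by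
  rw [trace_jacobian hUV (sub_pos.mpr hhi).ne']
  have : m * (1 - 2 * b * V) / (1 - b * V) < 0 :=
    div_neg_of_neg_of_pos (mul_neg_of_pos_of_neg hm (by linarith)) (sub_pos.mpr hhi)
  nlinarith [sq_nonneg V]

end Jacobian

end Klausmeier

open Klausmeier in
theorem stmt_16_general (a m b : ℝ) (hm : 0 < m) (hb : 0 < b)
    (h : 4 * b + 1 / b < a / m) :
    let V2 : ℝ := (a / m + Real.sqrt ((a / m) ^ 2 - 4 * (1 + (a / m) * b))) /
      (2 * (1 + (a / m) * b))
    let U2 : ℝ := m * (a / m - V2 / (1 - b * V2))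
    let M : Matrix (Fin 2) (Fin 2) ℝ :=
      !![-1 - V2 ^ 2, -2 * U2 * V2;
         (1 - b * V2) * V2 ^ 2, -m + (2 - 3 * b * V2) * U2 * V2]
    1 / (2 * b) < V2 ∧ 0 < M.det ∧ M.trace < 0 ∧
      ∀ μ : ℂ, μ ∈ spectrum ℂ (M.map (Complex.ofReal)) → μ.re < 0 := by
  show 1 / (2 * b) < vegetatedV (a / m) b ∧
    0 < (jacobian m b (vegetatedU m (a / m) b) (vegetatedV (a / m) b)).det ∧ _
  have hlo := one_half_lt_mul_vegetatedV hb h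
  have hhi := mul_vegetatedV_lt_one hb h
  have hUV := vegetatedU_mul_vegetatedV_mul_one_sub hb h m
  have hdet := det_jacobian_pos hm hUV hlo hhi
  have htr := trace_jacobian_neg hm hUV hlo hhi
  refine ⟨?_, hdet, htr, fun μ hμ =>
    Matrix.re_lt_zero_of_mem_spectrum_of_det_pos_of_trace_neg hdet htr hμ⟩
  rw [div_lt_iff₀ (by positivity)]
  linarith

/-- For `a/m > 4b + 1/b`, the vegetated steady state `(U₂,V₂)` has `V₂ > 1/(2b)`,
and its Jacobian `M` satisfies `det M > 0` and `trace M < 0`; hence all (complex)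
eigenvalues of `M` have negative real part, i.e. `(U₂,V₂)` is linearly stable
against homogeneous perturbations. -/
theorem stmt_16 (a m b : ℝ) (ha : 0 < a) (hm : 0 < m) (hb : 0 < b)
    (h : 4 * b + 1 / b < a / m) :
    let V2 : ℝ := (a / m + Real.sqrt ((a / m) ^ 2 - 4 * (1 + (a / m) * b))) /
      (2 * (1 + (a / m) * b))
    let U2 : ℝ := m * (a / m - V2 / (1 - b * V2))
    let M : Matrix (Fin 2) (Fin 2) ℝ :=
      !![-1 - V2 ^ 2, -2 * U2 * V2;
         (1 - b * V2) * V2 ^ 2, -m + (2 - 3 * b * V2) * U2 * V2]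
    1 / (2 * b) < V2 ∧ 0 < M.det ∧ M.trace < 0 ∧
      ∀ μ : ℂ, μ ∈ spectrum ℂ (M.map (Complex.ofReal)) → μ.re < 0 :=
  stmt_16_general a m b hm hb h
end

section
/- Let a, m, b > 0 with a/m > 2(b + sqrt(1+b²)), and let V_1 = (a/m − sqrt((a/m)² − 4(1+(a/m)b)))/(2(1+(a/m)b)). Then V_1 < −b + sqrt(1+b²), and consequently the determinant m(−1 + 2bV_1 + V_1²)/(1 − bV_1) of the associated Jacobian is negative, so the steady state (U_1,V_1) is linearly unstable. -/
/-!
With `s = a/m`, `V₁` is the smaller root of `(1 + sb)x² - sx + 1`, and `r = -b + √(1+b²)` is the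
positive root of `x² + 2bx - 1`. The hypothesis on `s` makes the first quadratic negative at `r`,
so `0 < V₁ < r` and hence `V₁² + 2bV₁ - 1 < 0`. The steady-state relation `U₁V₁(1 - bV₁) = m`
turns the Jacobian's determinant into `m(-1 + 2bV₁ + V₁²)/(1 - bV₁) < 0`, and a real `2 × 2`
matrix with negative determinant has a positive real root of its characteristic polynomial.
-/

open Real Polynomial

/-- The smaller root of `c x² - s x + γ` when `c > 0`. -/
noncomputable def smallerRoot (c s γ : ℝ) : ℝ := (s - √(s ^ 2 - 4 * c * γ)) / (2 * c)

section smallerRoot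

variable {c s γ : ℝ}

lemma smallerRoot_isRoot (hc : c ≠ 0) (hD : 0 ≤ s ^ 2 - 4 * c * γ) :
    c * smallerRoot c s γ ^ 2 - s * smallerRoot c s γ + γ = 0 := by
  have hsq := sq_sqrt hD
  unfold smallerRoot
  generalize √(s ^ 2 - 4 * c * γ) = d at hsq ⊢
  field_simp
  linear_combination hsq

lemma smallerRoot_pos (hc : 0 < c) (hγ : 0 < γ) (hs : 0 < s) : 0 < smallerRoot c s γ := by
  have : √(s ^ 2 - 4 * c * γ) < s := (sqrt_lt' hs).2 (by nlinarith)
  unfold smallerRoot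
  exact div_pos (by linarith) (by positivity)

/-- Completing the square: `4c(cr² - sr + γ) = (2cr - s)² - (s² - 4cγ)`. -/
lemma smallerRoot_lt_of_neg {r : ℝ} (hc : 0 < c) (hr : c * r ^ 2 - s * r + γ < 0) :
    smallerRoot c s γ < r := by
  have hsq : (2 * c * r - s) ^ 2 < s ^ 2 - 4 * c * γ := by nlinarith
  have := neg_sqrt_lt_of_sq_lt hsq
  unfold smallerRoot
  rw [div_lt_iff₀ (by positivity)]
  linarith

end smallerRoot

lemma Matrix.exists_pos_mem_spectrum_of_det_neg {A : Matrix (Fin 2) (Fin 2) ℝ} (h : A.det < 0) :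
    ∃ μ : ℝ, 0 < μ ∧ μ ∈ spectrum ℝ A := by
  set t := A.trace
  have hD : 0 ≤ t ^ 2 - 4 * A.det := by nlinarith [sq_nonneg t]
  have hsq := sq_sqrt hD
  refine ⟨(t + √(t ^ 2 - 4 * A.det)) / 2, ?_, mem_spectrum_of_isRoot_charpoly ?_⟩
  · nlinarith [sqrt_nonneg (t ^ 2 - 4 * A.det), sq_nonneg (t + √(t ^ 2 - 4 * A.det))]
  · simp only [IsRoot, charpoly_fin_two, eval_add, eval_sub, eval_pow, eval_mul, eval_X, eval_C]
    linear_combination hsq / 4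

lemma neg_add_sqrt_one_add_sq_pos (b : ℝ) : 0 < -b + √(1 + b ^ 2) := by
  have : b < √(1 + b ^ 2) := lt_sqrt_of_sq_lt (by linarith)
  linarith

lemma discrim_pos_of_neg {c s γ r : ℝ} (hc : 0 < c) (hr : c * r ^ 2 - s * r + γ < 0) :
    0 < s ^ 2 - 4 * c * γ := by
  nlinarith [sq_nonneg (2 * c * r - s)]

section Klausmeier

variable {b s V : ℝ}

lemma neg_one_add_two_mul_add_sq_neg
    (hV₀ : -b - √(1 + b ^ 2) < V) (hV₁ : V < -b + √(1 + b ^ 2)) :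
    -1 + 2 * b * V + V ^ 2 < 0 := by
  have : (V + b) ^ 2 < √(1 + b ^ 2) ^ 2 := sq_lt_sq' (by linarith) (by linarith)
  rw [sq_sqrt (by positivity)] at this
  linarith

lemma one_sub_mul_pos_of_lt (hb : 0 ≤ b) (hV : V < -b + √(1 + b ^ 2)) : 0 < 1 - b * V := by
  have hq := sq_sqrt (show 0 ≤ 1 + b ^ 2 by positivity)
  have hbq : b < √(1 + b ^ 2) := lt_sqrt_of_sq_lt (by linarith)
  nlinarith [mul_le_mul_of_nonneg_left hV.le hb]

/-- With `r = -b + √(1 + b²)` and `q = √(1 + b²)` one has `r² + 2br = 1` and `(b + q) r = 1`,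
so `(1 + sb) r² - s r + 1 = q r (2 - s r)` and `s r > 2 (b + q) r = 2`. -/
lemma klausmeier_quadratic_neg (h : 2 * (b + √(1 + b ^ 2)) < s) :
    (1 + s * b) * (-b + √(1 + b ^ 2)) ^ 2 - s * (-b + √(1 + b ^ 2)) + 1 < 0 := by
  set q := √(1 + b ^ 2)
  have hq : q ^ 2 = 1 + b ^ 2 := sq_sqrt (by positivity)
  have hr : 0 < -b + q := neg_add_sqrt_one_add_sq_pos b
  have hsr : 2 < s * (-b + q) := by nlinarith [mul_lt_mul_of_pos_right h hr]
  have hfactor :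
      (1 + s * b) * (-b + q) ^ 2 - s * (-b + q) + 1 = q * (-b + q) * (2 - s * (-b + q)) := by
    linear_combination (s * (-b + q) - 1) * hq
  rw [hfactor]
  exact mul_neg_of_pos_of_neg (by positivity) (by linarith)

lemma klausmeier_steady_state {m : ℝ} (hV : (1 + s * b) * V ^ 2 - s * V + 1 = 0)
    (hw : 1 - b * V ≠ 0) : m * (s - V / (1 - b * V)) * V * (1 - b * V) = m := by
  have hcancel : V / (1 - b * V) * (1 - b * V) = V := div_mul_cancel₀ _ hw
  linear_combination -m * hV - m * V * hcancel

lemma klausmeier_jacobian_det {m U : ℝ} (hU : U * V * (1 - b * V) = m) (hw : 1 - b * V ≠ 0) :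
    (!![-1 - V ^ 2, -2 * U * V; (1 - b * V) * V ^ 2, -m + (2 - 3 * b * V) * U * V]).det
      = m * (-1 + 2 * b * V + V ^ 2) / (1 - b * V) := by
  rw [Matrix.det_fin_two_of, eq_div_iff hw]
  linear_combination (-(2 - 3 * b * V - b * V ^ 3)) * hU

end Klausmeier

theorem stmt_17_general (a m b : ℝ) (hm : 0 < m) (hb : 0 < b)
    (h : 2 * (b + Real.sqrt (1 + b ^ 2)) < a / m) :
    let V1 : ℝ := (a / m - Real.sqrt ((a / m) ^ 2 - 4 * (1 + (a / m) * b))) /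
      (2 * (1 + (a / m) * b))
    let U1 : ℝ := m * (a / m - V1 / (1 - b * V1))
    let M : Matrix (Fin 2) (Fin 2) ℝ :=
      !![-1 - V1 ^ 2, -2 * U1 * V1;
         (1 - b * V1) * V1 ^ 2, -m + (2 - 3 * b * V1) * U1 * V1]
    V1 < -b + Real.sqrt (1 + b ^ 2) ∧
    m * (-1 + 2 * b * V1 + V1 ^ 2) / (1 - b * V1) < 0 ∧
    ∃ μ : ℝ, 0 < μ ∧ μ ∈ spectrum ℝ M := by
  intro V1 U1
  have hV1 : V1 = smallerRoot (1 + a / m * b) (a / m) 1 := by simp only [V1, smallerRoot, mul_one]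
  have hU1 : U1 = m * (a / m - V1 / (1 - b * V1)) := rfl
  clear_value U1 V1
  intro M
  generalize a / m = s at h hV1 hU1 ⊢
  have hs : 0 < s := by
    have : 0 < b + √(1 + b ^ 2) := by positivity
    linarith
  have hc : 0 < 1 + s * b := by positivity
  have hquad := klausmeier_quadratic_neg h
  have hroot : (1 + s * b) * V1 ^ 2 - s * V1 + 1 = 0 :=
    hV1 ▸ smallerRoot_isRoot hc.ne' (discrim_pos_of_neg hc hquad).le
  have hV1pos : 0 < V1 := hV1 ▸ smallerRoot_pos hc one_pos hs
  have hV1lt : V1 < -b + √(1 + b ^ 2) := hV1 ▸ smallerRoot_lt_of_neg hc hquad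
  have hden : 0 < 1 - b * V1 := one_sub_mul_pos_of_lt hb.le hV1lt
  have hneg : m * (-1 + 2 * b * V1 + V1 ^ 2) / (1 - b * V1) < 0 := by
    refine div_neg_of_neg_of_pos (mul_neg_of_pos_of_neg hm ?_) hden
    exact neg_one_add_two_mul_add_sq_neg (by linarith [sqrt_nonneg (1 + b ^ 2)]) hV1lt
  have hdet : M.det = m * (-1 + 2 * b * V1 + V1 ^ 2) / (1 - b * V1) :=
    klausmeier_jacobian_det (hU1 ▸ klausmeier_steady_state hroot hden.ne') hden.ne'
  exact ⟨hV1lt, hneg, Matrix.exists_pos_mem_spectrum_of_det_neg (hdet ▸ hneg)⟩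

/-- For `a/m > 2(b + √(1+b²))`, the smaller vegetated steady state has
`V₁ < -b + √(1+b²)`; consequently the determinant
`m(-1 + 2bV₁ + V₁²)/(1 - bV₁)` of the Jacobian is negative, so the Jacobian has a
positive real eigenvalue and `(U₁,V₁)` is linearly unstable. -/
theorem stmt_17 (a m b : ℝ) (ha : 0 < a) (hm : 0 < m) (hb : 0 < b)
    (h : 2 * (b + Real.sqrt (1 + b ^ 2)) < a / m) :
    let V1 : ℝ := (a / m - Real.sqrt ((a / m) ^ 2 - 4 * (1 + (a / m) * b))) /
      (2 * (1 + (a / m) * b))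
    let U1 : ℝ := m * (a / m - V1 / (1 - b * V1))
    let M : Matrix (Fin 2) (Fin 2) ℝ :=
      !![-1 - V1 ^ 2, -2 * U1 * V1;
         (1 - b * V1) * V1 ^ 2, -m + (2 - 3 * b * V1) * U1 * V1]
    V1 < -b + Real.sqrt (1 + b ^ 2) ∧
    m * (-1 + 2 * b * V1 + V1 ^ 2) / (1 - b * V1) < 0 ∧
    ∃ μ : ℝ, 0 < μ ∧ μ ∈ spectrum ℝ M :=
  stmt_17_general a m b hm hb h
end
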